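/- Let 𝒯 be a set of rooted binary phylogenetic X-trees and let N be a hybridization network for 𝒯 with hybridization number k. Then the deletion forest of N is an acyclic agreement forest of 𝒯 with at most k+1 components. -/

import Mathlib

open scoped Classical

/-! ## Finite directed graphs on `ℕ` -/

/-- A finite directed graph with vertices drawn from `ℕ`. -/
structure FinDigraph where
  verts : Finset ℕ
  edges : Finset (ℕ × ℕ)
deriving DecidableEq

namespace FinDigraph

def Adj (G : FinDigraph) (u v : ℕ) : Prop := (u, v) ∈ G.edges

def indeg (G : FinDigraph) (v : ℕ) : ℕ := (G.edges.filter fun e => e.2 = v).card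

def outdeg (G : FinDigraph) (v : ℕ) : ℕ := (G.edges.filter fun e => e.1 = v).card

def Reaches (G : FinDigraph) : ℕ → ℕ → Prop := Relation.ReflTransGen G.Adj

def Acyclic (G : FinDigraph) : Prop := ∀ u v, G.Adj u v → ¬ G.Reaches v u

/-- All edge endpoints are vertices. -/
def WF (G : FinDigraph) : Prop := ∀ e ∈ G.edges, e.1 ∈ G.verts ∧ e.2 ∈ G.verts

def IsSource (G : FinDigraph) (v : ℕ) : Prop := v ∈ G.verts ∧ G.indeg v = 0

def IsLeaf (G : FinDigraph) (v : ℕ) : Prop := v ∈ G.verts ∧ G.outdeg v = 0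

def leaves (G : FinDigraph) : Finset ℕ := G.verts.filter fun v => G.outdeg v = 0

/-- A reticulation: a node of indegree at least 2. -/
def IsRetic (G : FinDigraph) (v : ℕ) : Prop := v ∈ G.verts ∧ 2 ≤ G.indeg v

/-- The hybridization number `∑ (d⁻(v) − 1)` over all nodes `v` with indegree at least 2. -/
def hybNum (G : FinDigraph) : ℕ :=
  ∑ v ∈ G.verts.filter (fun v => 2 ≤ G.indeg v), (G.indeg v - 1)

end FinDigraph

/-! ## Phylogenetic trees and binary networks (taxa are identified with leaf names) -/

/-- A rooted binary phylogenetic tree: a root of indegree 0 and outdegree 1 from which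
everything is reachable; every other node has indegree 1 and outdegree 0 (a leaf) or 2. -/
def IsPhyloTree (T : FinDigraph) : Prop :=
  T.WF ∧ T.Acyclic ∧
  (∃ r, T.IsSource r ∧ T.outdeg r = 1 ∧ ∀ v ∈ T.verts, T.Reaches r v) ∧
  (∀ v ∈ T.verts, T.indeg v = 0 ∨ (T.indeg v = 1 ∧ (T.outdeg v = 0 ∨ T.outdeg v = 2)))

/-- A rooted binary phylogenetic tree whose set of taxa (= leaves) is `X`. -/
def IsTreeOn (T : FinDigraph) (X : Finset ℕ) : Prop := IsPhyloTree T ∧ T.leaves = X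

/-- A binary rooted phylogenetic network: a DAG with a single root of indegree 0 and
outdegree 1 from which everything is reachable; every other node is a leaf
(indegree 1, outdegree 0) or has total degree 3. -/
def IsBinNetwork (N : FinDigraph) : Prop :=
  N.WF ∧ N.Acyclic ∧
  (∃ r, N.IsSource r ∧ N.outdeg r = 1 ∧ ∀ v ∈ N.verts, N.Reaches r v) ∧
  (∀ v ∈ N.verts,
    N.indeg v = 0 ∨ (N.indeg v = 1 ∧ N.outdeg v = 0) ∨
    (N.indeg v + N.outdeg v = 3 ∧ N.outdeg v ≠ 0))

/-! ## Displaying trees: subdivision embeddings -/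

/-- The list of consecutive pairs of a list (the edges of a path). -/
def pathEdges : List ℕ → List (ℕ × ℕ)
  | a :: b :: l => (a, b) :: pathEdges (b :: l)
  | _ => []

/-- Internal vertices of a path. -/
def internals (l : List ℕ) : List ℕ := l.tail.dropLast

/-- The edge set `E` forms a subdivision of the tree `T`, witnessed by the vertex map `φ`
and, for each tree edge, a directed path `P`: suppressing all degree-2 nodes of the graph
formed by `E` yields `T`. -/
def IsSubdivisionVia (T : FinDigraph) (E : Finset (ℕ × ℕ))
    (φ : ℕ → ℕ) (P : ℕ → ℕ → List ℕ) : Prop :=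
  Set.InjOn φ ↑T.verts ∧
  (∀ v, T.IsLeaf v → φ v = v) ∧
  (∀ e ∈ T.edges,
    (P e.1 e.2).head? = some (φ e.1) ∧ (P e.1 e.2).getLast? = some (φ e.2) ∧
    2 ≤ (P e.1 e.2).length ∧ (P e.1 e.2).Nodup ∧
    ∀ d ∈ pathEdges (P e.1 e.2), d ∈ E) ∧
  (∀ d ∈ E, ∃ e ∈ T.edges, d ∈ pathEdges (P e.1 e.2)) ∧
  (∀ e ∈ T.edges, ∀ e' ∈ T.edges, e ≠ e' →
    ∀ x ∈ internals (P e.1 e.2), x ∉ P e'.1 e'.2) ∧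
  (∀ e ∈ T.edges, ∀ x ∈ internals (P e.1 e.2), ∀ w ∈ T.verts, φ w ≠ x)

/-- `N` displays `T`: `T` can be obtained from a subgraph of `N` by contracting edges;
equivalently, some subgraph of `N` is a subdivision of `T` (leaves are kept pointwise). -/
def Displays (N T : FinDigraph) : Prop :=
  ∃ E : Finset (ℕ × ℕ), E ⊆ N.edges ∧
    ∃ (φ : ℕ → ℕ) (P : ℕ → ℕ → List ℕ), IsSubdivisionVia T E φ P

/-- `N` is a hybridization network for the trees `𝒯` on taxa `X`. -/
def IsHybNetworkFor {ι : Type} (N : FinDigraph) (𝒯 : ι → FinDigraph) (X : Finset ℕ) : Prop :=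
  IsBinNetwork N ∧ N.leaves = X ∧ ∀ i, Displays N (𝒯 i)

/-! ## The deletion forest of a network -/

/-- Adjacency after deleting all reticulation edges (edges entering a node of
indegree at least 2), made symmetric. -/
def delAdj (N : FinDigraph) (u v : ℕ) : Prop :=
  ((u, v) ∈ N.edges ∧ N.indeg v ≤ 1) ∨ ((v, u) ∈ N.edges ∧ N.indeg u ≤ 1)

/-- Connectivity after deleting all reticulation edges. -/
def DelReach (N : FinDigraph) : ℕ → ℕ → Prop := Relation.ReflTransGen (delAdj N)

/-- The deletion forest of a network: delete all reticulation edges, discard components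
without taxa, and take the induced partition of the taxa. -/
noncomputable def deletionForest (N : FinDigraph) : Finset (Finset ℕ) :=
  N.leaves.image fun x => N.leaves.filter fun y => DelReach N x y

/-! ## Paths, spans, triples, agreement forests -/

/-- `v` lies on the (undirected) path between the leaves `a` and `b` in the tree `T`. -/
def OnTreePath (T : FinDigraph) (a b v : ℕ) : Prop :=
  (T.Reaches v a ∧ ¬ T.Reaches v b) ∨ (T.Reaches v b ∧ ¬ T.Reaches v a) ∨
  (T.Reaches v a ∧ T.Reaches v b ∧ ∀ w, T.Reaches w a → T.Reaches w b → T.Reaches w v)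

/-- `v` is the lowest common ancestor of `a` and `b` in `T`. -/
def IsLCA (T : FinDigraph) (a b v : ℕ) : Prop :=
  T.Reaches v a ∧ T.Reaches v b ∧ ∀ w, T.Reaches w a → T.Reaches w b → T.Reaches w v

/-- The rooted triple `ab|c` holds in `T`. -/
def Triple (T : FinDigraph) (a b c : ℕ) : Prop :=
  ∃ u v, IsLCA T a b u ∧ IsLCA T a c v ∧ u ≠ v ∧ T.Reaches v u

/-- The restrictions of `T` and `T'` to the taxa in `B` are isomorphic
(same rooted triples). -/
def SameTriples (T T' : FinDigraph) (B : Finset ℕ) : Prop :=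
  ∀ a ∈ B, ∀ b ∈ B, ∀ c ∈ B, (Triple T a b c ↔ Triple T' a b c)

/-- `v` belongs to the minimal subtree `T(B)` of `T` spanning the taxa in `B`. -/
def InSpan (T : FinDigraph) (B : Finset ℕ) (v : ℕ) : Prop :=
  ∃ a ∈ B, ∃ b ∈ B, OnTreePath T a b v

/-- A partition `P` of the taxa is a forest for the tree `T`: its blocks consist of
taxa, cover all taxa, and span node-disjoint subtrees of `T`. -/
def IsForestFor (T : FinDigraph) (P : Finset (Finset ℕ)) : Prop :=
  (∀ B ∈ P, B.Nonempty) ∧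
  (∀ B ∈ P, ∀ x ∈ B, T.IsLeaf x) ∧
  (∀ x, T.IsLeaf x → ∃ B ∈ P, x ∈ B) ∧
  (∀ B ∈ P, ∀ B' ∈ P, B ≠ B' → ∀ v, InSpan T B v → ¬ InSpan T B' v)

/-- `r` is the root of the subtree `T(B)`. -/
def SpanRoot (T : FinDigraph) (B : Finset ℕ) (r : ℕ) : Prop :=
  InSpan T B r ∧ ∀ v, InSpan T B v → T.Reaches r v

/-- Edge of the inheritance graph `IG(𝒯, P)`. -/
def IGAdj {ι : Type} (𝒯 : ι → FinDigraph) (P : Finset (Finset ℕ))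
    (B B' : Finset ℕ) : Prop :=
  B ∈ P ∧ B' ∈ P ∧ B ≠ B' ∧
  ∃ i, ∃ r r', SpanRoot (𝒯 i) B r ∧ SpanRoot (𝒯 i) B' r' ∧ (𝒯 i).Reaches r r'

/-- The inheritance graph contains no directed cycle. -/
def IGAcyclic {ι : Type} (𝒯 : ι → FinDigraph) (P : Finset (Finset ℕ)) : Prop :=
  ∀ B B', IGAdj 𝒯 P B B' → ¬ Relation.ReflTransGen (IGAdj 𝒯 P) B' B

/-- `P` is an agreement forest of the trees `𝒯`. -/
def IsAgreementForest {ι : Type} (𝒯 : ι → FinDigraph) (P : Finset (Finset ℕ)) : Prop :=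
  (∀ i, IsForestFor (𝒯 i) P) ∧ ∀ i j, ∀ B ∈ P, SameTriples (𝒯 i) (𝒯 j) B

/-- `P` is an acyclic agreement forest (AAF) of the trees `𝒯`. -/
def IsAAF {ι : Type} (𝒯 : ι → FinDigraph) (P : Finset (Finset ℕ)) : Prop :=
  IsAgreementForest 𝒯 P ∧ IGAcyclic 𝒯 P

/-! ## Pendant subtrees and chains -/

/-- `Y` is the taxon set of a pendant subtree of `T`. -/
def PendantIn (T : FinDigraph) (Y : Finset ℕ) : Prop :=
  ∃ v ∈ T.verts, ¬ T.IsSource v ∧ Y = T.leaves.filter fun x => T.Reaches v x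

/-- The trees `𝒯` have no nontrivial common pendant subtree. -/
def NoNontrivialCPS {ι : Type} (𝒯 : ι → FinDigraph) : Prop :=
  ¬ ∃ Y : Finset ℕ, 2 ≤ Y.card ∧ (∀ i, PendantIn (𝒯 i) Y) ∧
      ∀ i j, SameTriples (𝒯 i) (𝒯 j) Y

/-- The tuple `xs = (x_1, …, x_q)` is a chain of the tree `T`: with `p_i` the parent
of `x_i`, either `(p_q, …, p_1)` is a directed path of `T`, or `(p_q, …, p_2)` is a
directed path of `T` and `p_1 = p_2`. -/
def ChainIn (T : FinDigraph) (xs : List ℕ) : Prop :=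
  xs ≠ [] ∧ (∀ x ∈ xs, T.IsLeaf x) ∧
  ∃ ps : List ℕ, ps.length = xs.length ∧
    (∀ n (h : n < xs.length) (h' : n < ps.length),
      (ps.get ⟨n, h'⟩, xs.get ⟨n, h⟩) ∈ T.edges) ∧
    (ps.reverse.Chain' (fun a b => (a, b) ∈ T.edges) ∨
      ∃ p q rest, ps = p :: q :: rest ∧ p = q ∧
        (q :: rest).reverse.Chain' (fun a b => (a, b) ∈ T.edges))

/-- A common chain of the trees `𝒯`: a maximal tuple that is a chain of every tree. -/
def CommonChain {ι : Type} (𝒯 : ι → FinDigraph) (xs : List ℕ) : Prop :=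
  (∀ i, ChainIn (𝒯 i) xs) ∧ ∀ ys, (∀ i, ChainIn (𝒯 i) ys) → xs <:+: ys → ys = xs

/-! ## Generators and sides -/

/-- Number of non-leaf children of `v`. -/
noncomputable def nonLeafOutdeg (N : FinDigraph) (v : ℕ) : ℕ :=
  (N.edges.filter fun e => e.1 = v ∧ ¬ N.IsLeaf e.2).card

/-- `v` is suppressed when forming the underlying generator of `N`
(after deleting all leaves it has indegree 1 and outdegree 1). -/
def Suppressed (N : FinDigraph) (v : ℕ) : Prop :=
  v ∈ N.verts ∧ ¬ N.IsLeaf v ∧ N.indeg v = 1 ∧ nonLeafOutdeg N v = 1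

/-- `v` is a node of the underlying generator of `N`. -/
def GenNode (N : FinDigraph) (v : ℕ) : Prop :=
  v ∈ N.verts ∧ ¬ N.IsLeaf v ∧ ¬ Suppressed N v

/-- `l` witnesses the edge side of the underlying generator of `N` running from the
generator node `u` to the generator node `w` (all interior vertices are suppressed). -/
def GenEdgePath (N : FinDigraph) (u w : ℕ) (l : List ℕ) : Prop :=
  GenNode N u ∧ GenNode N w ∧
  l.head? = some u ∧ l.getLast? = some w ∧ 2 ≤ l.length ∧
  l.Chain' (fun a b => (a, b) ∈ N.edges ∧ ¬ N.IsLeaf b) ∧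
  ∀ v ∈ internals l, Suppressed N v

/-- A side of a generator: an edge side or a node side. -/
inductive GenSide : Type
  | edgeSide : ℕ → ℕ → GenSide
  | nodeSide : ℕ → GenSide

/-- `s` is a side of the underlying generator of `N`. -/
def IsSideOf (N : FinDigraph) : GenSide → Prop
  | .edgeSide u w => ∃ l, GenEdgePath N u w l
  | .nodeSide v => GenNode N v ∧ 2 ≤ N.indeg v ∧ nonLeafOutdeg N v = 0

/-- The taxon `x` is on the side `s` of the underlying generator of `N`. -/
def OnSide (N : FinDigraph) (x : ℕ) : GenSide → Prop
  | .edgeSide u w =>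
      N.IsLeaf x ∧ ∃ l, GenEdgePath N u w l ∧ ∃ p ∈ internals l, (p, x) ∈ N.edges
  | .nodeSide v => N.IsLeaf x ∧ (v, x) ∈ N.edges ∧ 2 ≤ N.indeg v ∧ nonLeafOutdeg N v = 0

/-! ## Canonical Networks with Embedded Trees (CNETs) -/

/-- A canonical network with embedded trees: the DAG `H` together with, for every
tree index `i`, the edge set `emb i` of the image of the `i`-th tree, the vertex
embedding `vmap i` and the path system `pmap i` witnessing that the image is a
subdivision of the `i`-th tree. -/
structure CNET (ι : Type) where
  H : FinDigraph
  emb : ι → Finset (ℕ × ℕ)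
  vmap : ι → ℕ → ℕ
  pmap : ι → ℕ → ℕ → List ℕ

/-- Conditions (i)–(viii) of a CNET for the trees `𝒯` over the taxa `X`. -/
def IsCNET {ι : Type} (𝒯 : ι → FinDigraph) (X : Finset ℕ) (𝓗 : CNET ι) : Prop :=
  -- (i) H is a DAG
  𝓗.H.WF ∧ 𝓗.H.Acyclic ∧
  -- (ii) every root has one child
  (∀ v, 𝓗.H.IsSource v → 𝓗.H.outdeg v = 1) ∧
  -- (iii) leaves are bijectively labelled by X (labels identified with leaf names)
  𝓗.H.leaves = X ∧
  -- (iv) each emb i is an image of the tree 𝒯 i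
  (∀ i, 𝓗.emb i ⊆ 𝓗.H.edges ∧
    IsSubdivisionVia (𝒯 i) (𝓗.emb i) (𝓗.vmap i) (𝓗.pmap i)) ∧
  -- (v) every tree image contains an edge incident to a root
  (∀ i, ∃ e ∈ 𝓗.emb i, 𝓗.H.IsSource e.1) ∧
  -- (vi) every edge belongs to some tree image
  (∀ e ∈ 𝓗.H.edges, ∃ i, e ∈ 𝓗.emb i) ∧
  -- (vii) every non-leaf non-root node has exactly two children
  (∀ v ∈ 𝓗.H.verts, 𝓗.H.outdeg v ≠ 0 → 𝓗.H.indeg v ≠ 0 → 𝓗.H.outdeg v = 2) ∧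
  -- (viii) for every non-leaf non-root node some tree image contains both child edges
  (∀ v ∈ 𝓗.H.verts, 𝓗.H.outdeg v ≠ 0 → 𝓗.H.indeg v ≠ 0 →
    ∃ i, ∀ w, (v, w) ∈ 𝓗.H.edges → (v, w) ∈ 𝓗.emb i)

/-- `v` lies, after deleting all reticulation edges, in a component containing a root. -/
def RootComp (H : FinDigraph) (v : ℕ) : Prop := ∃ r, H.IsSource r ∧ DelReach H v r

/-- Equivalence of vertices used for the deletion AAF of a CNET: connectivity after
deleting reticulation edges, with all root components merged (as happens in the
hybridization network induced by the CNET). -/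
def CnetDelEquiv (H : FinDigraph) (u v : ℕ) : Prop :=
  DelReach H u v ∨ (RootComp H u ∧ RootComp H v)

/-- The deletion AAF of a CNET (the deletion forest of its induced network). -/
noncomputable def cnetDeletionAAF (H : FinDigraph) : Finset (Finset ℕ) :=
  H.leaves.image fun x => H.leaves.filter fun y => CnetDelEquiv H x y

/-- `a` and `b` are leaves (the root of `T` counted as a leaf) lying in the same
component of the deletion AAF of the CNET with network `H`. -/
def SameFBlock (H T : FinDigraph) (a b : ℕ) : Prop :=
  (H.IsLeaf a ∧ H.IsLeaf b ∧ CnetDelEquiv H a b) ∨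
  (T.IsSource a ∧ T.IsSource b) ∨
  (T.IsSource a ∧ H.IsLeaf b ∧ RootComp H b) ∨
  (T.IsSource b ∧ H.IsLeaf a ∧ RootComp H a)

/-- `I(T)`: the nodes of the tree `T` lying on no path between two leaves in the same
component of the deletion AAF of the CNET (the root of `T` counted as a leaf). -/
noncomputable def ISet {ι : Type} (𝓗 : CNET ι) (T : FinDigraph) : Finset ℕ :=
  T.verts.filter fun v => ¬ ∃ a b, SameFBlock 𝓗.H T a b ∧ OnTreePath T a b v

/-! ## Signatures of CNETs -/

/-- Vertices lying in a deletion component that contains a taxon or a root. -/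
def InFComp (H : FinDigraph) (v : ℕ) : Prop :=
  ∃ x, (H.IsLeaf x ∨ H.IsSource x) ∧ CnetDelEquiv H v x

/-- The contraction equivalence used to form the signature: the image of every
component of the deletion AAF is contracted to a single node. -/
def ContractEquiv (H : FinDigraph) (u v : ℕ) : Prop :=
  u = v ∨ (InFComp H u ∧ InFComp H v ∧ CnetDelEquiv H u v)

/-- Canonical representative of the contraction class of `v`. -/
noncomputable def kappa (H : FinDigraph) (v : ℕ) : ℕ :=
  if h : (H.verts.filter fun w => ContractEquiv H v w).Nonempty
  then (H.verts.filter fun w => ContractEquiv H v w).min' h else v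

/-- Vertex set of the signature. -/
noncomputable def sigVerts (H : FinDigraph) : Finset ℕ := H.verts.image (kappa H)

/-- Edge multiset of the signature (parallel edges are kept). -/
noncomputable def sigEdges (H : FinDigraph) : Multiset (ℕ × ℕ) :=
  (H.edges.val.map fun e => (kappa H e.1, kappa H e.2)).filter fun e => e.1 ≠ e.2

/-- Multiplicity of the signature edge `(u, v)`. -/
noncomputable def sigMult (H : FinDigraph) (u v : ℕ) : ℕ :=
  ((sigEdges H).filter fun e => e = (u, v)).card

/-- Indegree in the signature. -/
noncomputable def sigIndeg (H : FinDigraph) (v : ℕ) : ℕ :=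
  ((sigEdges H).filter fun e => e.2 = v).card

/-- Hybridization number of the signature. -/
noncomputable def sigHybNum (H : FinDigraph) : ℕ :=
  ∑ v ∈ (sigVerts H).filter (fun v => 2 ≤ sigIndeg H v), (sigIndeg H v - 1)

/-! ## Wiring guesses and descriptions -/

/-- A wiring guess for the image `H(r_C)` of a component root: the number of its parent
edges, which parent edge (if any) each tree image uses, and for each parent edge a tree
for which its top endpoint is a split node. -/
structure WiringGuess (ι : Type) where
  numParents : ℕ
  colourOf : ι → Option ℕ
  splitGuess : ℕ → ι

/-- `x` is a `T`-split node (for the tree with index `i`): both of its child edges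
belong to the image of that tree. -/
def IsTSplit {ι : Type} (𝓗 : CNET ι) (i : ι) (x : ℕ) : Prop :=
  𝓗.H.outdeg x = 2 ∧ ∀ y, (x, y) ∈ 𝓗.H.edges → (x, y) ∈ 𝓗.emb i

/-- The wiring guess `g` holds at the node `w` of the CNET `𝓗`. -/
def GuessHoldsAt {ι : Type} (𝓗 : CNET ι) (w : ℕ) (g : WiringGuess ι) : Prop :=
  ∃ e : ℕ → ℕ,
    Set.InjOn e {j | j < g.numParents} ∧
    (∀ u, (u, w) ∈ 𝓗.H.edges ↔ ∃ j < g.numParents, e j = u) ∧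
    (∀ i j, g.colourOf i = some j ↔ (j < g.numParents ∧ (e j, w) ∈ 𝓗.emb i)) ∧
    (∀ j < g.numParents, IsTSplit 𝓗 (g.splitGuess j) (e j))

/-- `v` is the image `H(r_C)` in `H` of the root of the AAF component with taxa `B`. -/
def IsCompImageRoot (H : FinDigraph) (B : Finset ℕ) (v : ℕ) : Prop :=
  v ∈ H.verts ∧ (∃ x ∈ B, CnetDelEquiv H v x) ∧ (H.indeg v = 0 ∨ 2 ≤ H.indeg v)

/-- A description `(𝒢, F*, 𝒯)`: the deletion AAF `F`, the sets `Inodes i = I(𝒯 i)`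
forming the extension of `F` to `F*`, and the wiring guesses for all component roots
(`none` exactly for the component containing the tree root). -/
structure Description (ι : Type) where
  F : Finset (Finset ℕ)
  Inodes : ι → Finset ℕ
  gF : Finset ℕ → Option (WiringGuess ι)
  gI : ι → ℕ → Option (WiringGuess ι)

/-- The CNET `𝓗` has description `D`. -/
def HasDescription {ι : Type} (𝒯 : ι → FinDigraph) (𝓗 : CNET ι) (D : Description ι) : Prop :=
  cnetDeletionAAF 𝓗.H = D.F ∧
  (∀ i, ISet 𝓗 (𝒯 i) = D.Inodes i) ∧
  (∀ B ∈ D.F,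
    (D.gF B = none ↔ ∃ x ∈ B, RootComp 𝓗.H x) ∧
    ∀ g, D.gF B = some g → ∃ v, IsCompImageRoot 𝓗.H B v ∧ GuessHoldsAt 𝓗 v g) ∧
  (∀ i, ∀ u ∈ D.Inodes i, ∃ g, D.gI i u = some g ∧ GuessHoldsAt 𝓗 (𝓗.vmap i u) g)

/-- Two CNETs are equivalent: their signatures are equal, i.e. there is a
label-preserving isomorphism between their signatures. -/
def CNETEquiv {ι : Type} (𝒯 : ι → FinDigraph) (𝓗₁ 𝓗₂ : CNET ι) : Prop :=
  ∃ θ : ℕ → ℕ,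
    Set.BijOn θ ↑(sigVerts 𝓗₁.H) ↑(sigVerts 𝓗₂.H) ∧
    (∀ u ∈ sigVerts 𝓗₁.H, ∀ v ∈ sigVerts 𝓗₁.H,
      sigMult 𝓗₂.H (θ u) (θ v) = sigMult 𝓗₁.H u v) ∧
    (∀ B ∈ cnetDeletionAAF 𝓗₁.H, ∀ v w : ℕ,
      IsCompImageRoot 𝓗₁.H B v → IsCompImageRoot 𝓗₂.H B w →
      θ (kappa 𝓗₁.H v) = kappa 𝓗₂.H w) ∧
    (∀ i : ι, ∀ u : ℕ, u ∈ ISet 𝓗₁ (𝒯 i) → u ∈ ISet 𝓗₂ (𝒯 i) →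
      θ (kappa 𝓗₁.H (𝓗₁.vmap i u)) = kappa 𝓗₂.H (𝓗₂.vmap i u))

/-! ## Counting wiring guesses (three trees) -/

/-- A structurally possible wiring guess for the image of a node of `I(T)`, where `t`
is the colour of the tree `T`: between 1 and 3 parent edges with disjoint nonempty
colour sets, at least one parent edge of colour `t`, and each split guess taken from
the colour set of the corresponding parent edge. -/
def ValidGuessI (t : Fin 3) (g : WiringGuess (Fin 3)) : Prop :=
  1 ≤ g.numParents ∧ g.numParents ≤ 3 ∧
  (∀ i j, g.colourOf i = some j → j < g.numParents) ∧
  (∀ j < g.numParents, ∃ i, g.colourOf i = some j) ∧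
  g.colourOf t ≠ none ∧
  (∀ j < g.numParents, g.colourOf (g.splitGuess j) = some j)

/-- A structurally possible wiring guess for the image of an AAF component root:
additionally, the union of the colour sets of the parent edges contains all colours. -/
def ValidGuessF (g : WiringGuess (Fin 3)) : Prop :=
  1 ≤ g.numParents ∧ g.numParents ≤ 3 ∧
  (∀ i j, g.colourOf i = some j → j < g.numParents) ∧
  (∀ j < g.numParents, ∃ i, g.colourOf i = some j) ∧
  (∀ i, g.colourOf i ≠ none) ∧
  (∀ j < g.numParents, g.colourOf (g.splitGuess j) = some j)

/-- Two wiring guesses are the same up to renumbering the parent edges. -/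
def GuessIso {ι : Type} (g g' : WiringGuess ι) : Prop :=
  g.numParents = g'.numParents ∧
  ∃ σ : ℕ → ℕ,
    Set.BijOn σ {j | j < g.numParents} {j | j < g.numParents} ∧
    (∀ i, g'.colourOf i = (g.colourOf i).map σ) ∧
    (∀ j < g.numParents, g'.splitGuess (σ j) = g.splitGuess j)

/-! ## Taxa reachable avoiding reticulations -/

/-- There is a directed path from `r` to `x` meeting no reticulation apart
possibly from `r` itself. -/
def PathAvoidRetic (N : FinDigraph) (r x : ℕ) : Prop :=
  ∃ l : List ℕ, l.head? = some r ∧ l.getLast? = some x ∧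
    l.Chain' (fun a b => (a, b) ∈ N.edges) ∧
    ∀ v ∈ l.tail, ¬ N.IsRetic v

/-- `X(r)`: the taxa reachable from `r` by directed paths meeting no reticulation
apart from `r`. -/
noncomputable def XrSet (N : FinDigraph) (r : ℕ) : Finset ℕ :=
  N.leaves.filter fun x => PathAvoidRetic N r x

/-! ## Forests obtained by deleting edges of a tree -/

/-- The partition of the taxa of `T` induced by the connected components of `T`
after deleting the edge set `D`. -/
noncomputable def forestFromDeletion (T : FinDigraph) (D : Finset (ℕ × ℕ)) :
    Finset (Finset ℕ) :=
  T.leaves.image fun x => T.leaves.filter fun y =>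
    Relation.ReflTransGen
      (fun a b => ((a, b) ∈ T.edges ∧ (a, b) ∉ D) ∨ ((b, a) ∈ T.edges ∧ (b, a) ∉ D)) x y

/-!
Deleting the reticulation edges of `N` leaves a graph in which every node has at most one
parent, so each of its components is a rooted tree whose root is the root of `N` or a
reticulation; distinct blocks of the deletion forest lie in components with distinct roots,
which bounds their number by `k + 1`.

Fix a displayed tree `T`, embedded in `N` by `φ`, and a block `B` whose component has root
`s`. An image path of `T` can enter the component only through `s`, and the images of the two
tree paths leaving the lowest common ancestor `m` of two taxa meet only in `φ m`. Hence `φ`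
maps the subtree `T(B)` into the component, and lowest common ancestors of taxa of `B` to
lowest common ancestors in the component. So every `T|B` has the triples of the component,
the subtrees `T(B)` of different blocks are disjoint, and an edge `B → B'` of the
inheritance graph yields a path in `N` from the root of `B` to the root of `B'`: a cycle in
the inheritance graph would be a cycle in `N`.
-/

open Relation

section Paths

variable {α : Type*} {r : α → α → Prop}

theorem Relation.ReflTransGen.total_of_leftUnique (U : Relator.LeftUnique r) {a u v : α}
    (hu : ReflTransGen r u a) (hv : ReflTransGen r v a) :
    ReflTransGen r u v ∨ ReflTransGen r v u := by
  rcases ReflTransGen.total_of_right_unique U.flip (reflTransGen_swap.2 hu)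
    (reflTransGen_swap.2 hv) with h | h
  · exact Or.inr (reflTransGen_swap.1 h)
  · exact Or.inl (reflTransGen_swap.1 h)

namespace List.IsChain

theorem reflTransGen_of_mem {l : List α} {a b m : α} (hl : l.IsChain r)
    (ha : l.head? = some a) (hb : l.getLast? = some b) (hm : m ∈ l) :
    ReflTransGen r a m ∧ ReflTransGen r m b := by
  induction l generalizing a m with
  | nil => simp at hm
  | cons x t ih =>
    obtain rfl : x = a := by simpa using ha
    cases t with
    | nil =>
      obtain rfl : m = x := by simpa using hm
      obtain rfl : m = b := by simpa using hb
      exact ⟨.refl, .refl⟩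
    | cons y t =>
      rw [isChain_cons_cons] at hl
      rw [getLast?_cons_cons] at hb
      rcases mem_cons.mp hm with rfl | hm
      · exact ⟨.refl, (ih hl.2 rfl hb mem_cons_self).2.head hl.1⟩
      · exact (ih hl.2 rfl hb hm).imp_left (·.head hl.1)

theorem reflTransGen_head_getLast {l : List α} {a b : α} (hl : l.IsChain r)
    (ha : l.head? = some a) (hb : l.getLast? = some b) : ReflTransGen r a b :=
  (hl.reflTransGen_of_mem ha hb (mem_of_getLast? hb)).1

theorem exists_crossing {l : List α} {a b : α} (p : α → Prop) (hl : l.IsChain r)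
    (ha : l.head? = some a) (hb : l.getLast? = some b) (hpa : ¬ p a) (hpb : p b) :
    ∃ x y, r x y ∧ ¬ p x ∧ p y ∧ y ∈ l := by
  induction l generalizing a with
  | nil => simp at ha
  | cons x t ih =>
    obtain rfl : x = a := by simpa using ha
    cases t with
    | nil =>
      obtain rfl : x = b := by simpa using hb
      exact absurd hpb hpa
    | cons y t =>
      rw [isChain_cons_cons] at hl
      rw [getLast?_cons_cons] at hb
      by_cases hpy : p y
      · exact ⟨x, y, hl.1, hpa, hpy, by simp⟩
      · obtain ⟨x', y', h⟩ := ih hl.2 rfl hb hpy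
        exact ⟨x', y', h.1, h.2.1, h.2.2.1, mem_cons_of_mem _ h.2.2.2⟩

theorem mem_of_reflTransGen (U : Relator.LeftUnique r)
    (hanti : ∀ ⦃x y⦄, ReflTransGen r x y → ReflTransGen r y x → x = y)
    {l : List α} {a b w : α} (hl : l.IsChain r)
    (ha : l.head? = some a) (hb : l.getLast? = some b)
    (haw : ReflTransGen r a w) (hwb : ReflTransGen r w b) : w ∈ l := by
  induction l generalizing a with
  | nil => simp at ha
  | cons x t ih =>
    obtain rfl : x = a := by simpa using ha
    cases t with
    | nil =>
      obtain rfl : x = b := by simpa using hb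
      simp [hanti hwb haw]
    | cons y t =>
      rw [isChain_cons_cons] at hl
      rw [getLast?_cons_cons] at hb
      rcases ReflTransGen.total_of_leftUnique U hwb (hl.2.reflTransGen_head_getLast rfl hb)
        with hwy | hyw
      · rcases hwy.cases_tail with rfl | ⟨d, hwd, hdy⟩
        · simp
        · obtain rfl := U hl.1 hdy
          simp [hanti haw hwd]
      · exact mem_cons_of_mem _ (ih hl.2 rfl hb hyw)

end List.IsChain

theorem isChain_of_forall_mem_pathEdges {r : ℕ → ℕ → Prop} :
    ∀ {l : List ℕ}, (∀ d ∈ pathEdges l, r d.1 d.2) → l.IsChain r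
  | [], _ => .nil
  | [x], _ => .singleton x
  | x :: y :: t, h => by
    refine .cons_cons (h (x, y) (by simp [pathEdges])) (isChain_of_forall_mem_pathEdges ?_)
    exact fun d hd => h d (by simp [pathEdges, hd])

theorem eq_head_or_eq_getLast_or_mem_internals {l : List ℕ} {x a b : ℕ} (hx : x ∈ l)
    (ha : l.head? = some a) (hb : l.getLast? = some b) :
    x = a ∨ x = b ∨ x ∈ internals l := by
  obtain ⟨c, t, rfl⟩ := List.exists_cons_of_ne_nil (List.ne_nil_of_mem hx)
  obtain rfl : c = a := by simpa using ha
  rcases List.mem_cons.mp hx with rfl | hx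
  · exact Or.inl rfl
  obtain ⟨t', d, rfl⟩ := (List.eq_nil_or_concat' t).resolve_left (List.ne_nil_of_mem hx)
  obtain rfl : d = b := by
    rw [← List.cons_append, List.getLast?_concat] at hb
    exact Option.some.inj hb
  rcases List.mem_append.mp hx with hx | hx
  · simp [internals, hx]
  · simp_all

end Paths

namespace FinDigraph

variable {G N : FinDigraph}

theorem reaches_antisymm (hac : G.Acyclic) {a b : ℕ} (hab : G.Reaches a b)
    (hba : G.Reaches b a) : a = b := by
  rcases hab.cases_head with rfl | ⟨c, hac', hcb⟩
  · rfl
  · exact absurd (hcb.trans hba) (hac _ _ hac')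

theorem mem_verts_of_reaches (hwf : G.WF) {u v : ℕ} (h : G.Reaches u v)
    (hv : v ∈ G.verts) : u ∈ G.verts := by
  rcases h.cases_head with rfl | ⟨c, huc, _⟩
  · exact hv
  · exact (hwf _ huc).1

theorem isLeaf_iff_mem_leaves {x : ℕ} : G.IsLeaf x ↔ x ∈ G.leaves := by
  simp [IsLeaf, leaves]

theorem indeg_ne_zero_iff {v : ℕ} : G.indeg v ≠ 0 ↔ ∃ u, G.Adj u v := by
  simp [indeg, Adj]

theorem eq_of_adj_of_indeg_le_one {u u' v : ℕ} (h : G.indeg v ≤ 1) (hu : G.Adj u v)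
    (hu' : G.Adj u' v) : u = u' :=
  congrArg Prod.fst <| Finset.card_le_one.mp h _ (Finset.mem_filter.mpr ⟨hu, rfl⟩) _
    (Finset.mem_filter.mpr ⟨hu', rfl⟩)

theorem _root_.IsLCA.eq (hac : G.Acyclic) {a b u v : ℕ} (hu : IsLCA G a b u)
    (hv : IsLCA G a b v) : u = v :=
  reaches_antisymm hac (hv.2.2 u hu.1 hu.2.1) (hu.2.2 v hv.1 hv.2.1)

noncomputable def ancestors (G : FinDigraph) (v : ℕ) : Finset ℕ := G.verts.filter (G.Reaches · v)

theorem card_ancestors_lt {u v : ℕ} (huv : G.Reaches u v) (hvu : ¬ G.Reaches v u)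
    (hv : v ∈ G.verts) : (G.ancestors u).card < (G.ancestors v).card := by
  refine Finset.card_lt_card ⟨fun w hw => ?_, fun hsub => ?_⟩
  · simp only [ancestors, Finset.mem_filter] at hw ⊢
    exact ⟨hw.1, hw.2.trans huv⟩
  · exact hvu (Finset.mem_filter.mp (hsub (Finset.mem_filter.mpr ⟨hv, .refl⟩))).2

theorem exists_isLCA (hwf : G.WF) (U : Relator.LeftUnique G.Adj) {a b w : ℕ}
    (ha : a ∈ G.verts) (hwa : G.Reaches w a) (hwb : G.Reaches w b) : ∃ m, IsLCA G a b m := by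
  let common := G.verts.filter fun w => G.Reaches w a ∧ G.Reaches w b
  have hw : w ∈ common := Finset.mem_filter.mpr ⟨mem_verts_of_reaches hwf hwa ha, hwa, hwb⟩
  obtain ⟨m, hm, hmax⟩ := common.exists_max_image (fun w => (G.ancestors w).card) ⟨w, hw⟩
  obtain ⟨-, hma, hmb⟩ := Finset.mem_filter.mp hm
  refine ⟨m, hma, hmb, fun w hwa hwb => ?_⟩
  by_contra hwm
  have hmw : G.Reaches m w := (ReflTransGen.total_of_leftUnique U hwa hma).resolve_left hwm
  have hwV : w ∈ G.verts := mem_verts_of_reaches hwf hwa ha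
  have := hmax w (Finset.mem_filter.mpr ⟨hwV, hwa, hwb⟩)
  exact absurd (card_ancestors_lt hmw hwm hwV) (not_lt.mpr this)

theorem _root_.IsPhyloTree.leftUnique {T : FinDigraph} (hT : IsPhyloTree T) :
    Relator.LeftUnique T.Adj := by
  intro u u' v h h'
  rcases hT.2.2.2 v (hT.1 _ h).2 with h0 | ⟨h1, -⟩
  · exact absurd (indeg_ne_zero_iff.mpr ⟨u, h⟩) (not_not.mpr h0)
  · exact eq_of_adj_of_indeg_le_one h1.le h h'

theorem _root_.IsPhyloTree.exists_isLCA {T : FinDigraph} (hT : IsPhyloTree T) {a b : ℕ}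
    (ha : a ∈ T.verts) (hb : b ∈ T.verts) : ∃ m, IsLCA T a b m :=
  let ⟨_, _, _, hroot⟩ := hT.2.2.1
  FinDigraph.exists_isLCA hT.1 hT.leftUnique ha (hroot a ha) (hroot b hb)

def delGraph (N : FinDigraph) : FinDigraph :=
  ⟨N.verts, N.edges.filter fun e => N.indeg e.2 ≤ 1⟩

theorem delGraph_adj {u v : ℕ} : (delGraph N).Adj u v ↔ N.Adj u v ∧ N.indeg v ≤ 1 := by
  simp [delGraph, Adj]

theorem reaches_of_delGraph {u v : ℕ} (h : (delGraph N).Reaches u v) : N.Reaches u v :=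
  ReflTransGen.mono (fun _ _ h => (delGraph_adj.mp h).1) _ _ h

theorem Acyclic.delGraph (hac : N.Acyclic) : (delGraph N).Acyclic :=
  fun _ _ h h' => hac _ _ (delGraph_adj.mp h).1 (reaches_of_delGraph h')

theorem delGraph_leftUnique : Relator.LeftUnique (delGraph N).Adj := fun _ _ _ h h' =>
  eq_of_adj_of_indeg_le_one (delGraph_adj.mp h).2 (delGraph_adj.mp h).1 (delGraph_adj.mp h').1

theorem delReach_symm {u v : ℕ} (h : DelReach N u v) : DelReach N v u :=
  ReflTransGen.mono (fun _ _ h => Or.symm h) _ _ (reflTransGen_swap.2 h)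

theorem delReach_of_delGraph {u v : ℕ} (h : (delGraph N).Reaches u v) : DelReach N u v :=
  ReflTransGen.mono (fun _ _ h => Or.inl (delGraph_adj.mp h)) _ _ h

def IsDelRoot (N : FinDigraph) (s : ℕ) : Prop := ∀ u, ¬ (delGraph N).Adj u s

theorem IsDelRoot.eq_of_reaches {s v : ℕ} (hs : IsDelRoot N s)
    (h : (delGraph N).Reaches v s) : v = s := by
  rcases h.cases_tail with h | ⟨c, -, hc⟩
  · exact h.symm
  · exact absurd hc (hs c)

theorem IsDelRoot.eq_of_reaches_of_reaches {s s' w : ℕ} (hs : IsDelRoot N s)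
    (hs' : IsDelRoot N s') (h : (delGraph N).Reaches s w) (h' : (delGraph N).Reaches s' w) :
    s = s' := by
  rcases ReflTransGen.total_of_leftUnique delGraph_leftUnique h h' with h2 | h2
  · exact hs'.eq_of_reaches h2
  · exact (hs.eq_of_reaches h2).symm

theorem isDelRoot_of_not_indeg_le_one {v : ℕ} (h : ¬ N.indeg v ≤ 1) : IsDelRoot N v :=
  fun _ hu => h (delGraph_adj.mp hu).2

theorem IsDelRoot.indeg_eq_zero_or_two_le {s : ℕ} (hs : IsDelRoot N s) :
    N.indeg s = 0 ∨ 2 ≤ N.indeg s := by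
  by_contra! h
  obtain ⟨u, hu⟩ := indeg_ne_zero_iff.mp h.1
  exact hs u (delGraph_adj.mpr ⟨hu, by omega⟩)

theorem IsDelRoot.delGraph_reaches_of_adj {s u c : ℕ} (hs : IsDelRoot N s)
    (hc : (delGraph N).Reaches s c) (h : (delGraph N).Adj u c) : (delGraph N).Reaches s u := by
  rcases hc.cases_tail with rfl | ⟨p, hsp, hpc⟩
  · exact absurd h (hs u)
  · rwa [delGraph_leftUnique h hpc]

theorem IsDelRoot.delGraph_reaches_of_delReach {s w : ℕ} (hs : IsDelRoot N s)
    (h : DelReach N s w) : (delGraph N).Reaches s w := by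
  induction h with
  | refl => exact .refl
  | tail _ hbc ih =>
    rcases hbc with h | h
    · exact ih.tail (delGraph_adj.mpr h)
    · exact hs.delGraph_reaches_of_adj ih (delGraph_adj.mpr h)

theorem exists_isDelRoot_reaches (hwf : N.WF) (hac : N.Acyclic) (v : ℕ) :
    ∃ s, IsDelRoot N s ∧ (delGraph N).Reaches s v := by
  induction hn : (N.ancestors v).card using Nat.strong_induction_on generalizing v with
  | _ n ih =>
    by_cases hv : IsDelRoot N v
    · exact ⟨v, hv, .refl⟩
    obtain ⟨u, hu⟩ := not_forall_not.mp hv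
    have huv := (delGraph_adj.mp hu).1
    obtain ⟨s, hs, hsu⟩ := ih _ (hn ▸ card_ancestors_lt (.single huv)
      (hac _ _ huv) (hwf _ huv).2) u rfl
    exact ⟨s, hs, hsu.tail hu⟩

theorem IsDelRoot.delGraph_reaches_or_reaches {s w c : ℕ} (hs : IsDelRoot N s)
    (hwc : N.Reaches w c) (hc : (delGraph N).Reaches s c) :
    (delGraph N).Reaches s w ∨ N.Reaches w s := by
  induction hwc with
  | refl => exact Or.inl hc
  | @tail b c hwb hbc ih =>
    by_cases hdeg : N.indeg c ≤ 1
    · exact ih (hs.delGraph_reaches_of_adj hc (delGraph_adj.mpr ⟨hbc, hdeg⟩))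
    · obtain rfl := (isDelRoot_of_not_indeg_le_one hdeg).eq_of_reaches hc
      exact Or.inr (hwb.tail hbc)

theorem IsDelRoot.delGraph_reaches_of_reaches {s c₁ c₂ : ℕ} (hac : N.Acyclic)
    (hs : IsDelRoot N s) (h₁ : (delGraph N).Reaches s c₁) (h : N.Reaches c₁ c₂)
    (h₂ : (delGraph N).Reaches s c₂) : (delGraph N).Reaches c₁ c₂ := by
  induction h with
  | refl => exact .refl
  | @tail b c hcb hbc ih =>
    by_cases hdeg : N.indeg c ≤ 1
    · have hk : (delGraph N).Adj b c := delGraph_adj.mpr ⟨hbc, hdeg⟩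
      exact (ih (hs.delGraph_reaches_of_adj h₂ hk)).tail hk
    · obtain rfl := (isDelRoot_of_not_indeg_le_one hdeg).eq_of_reaches h₂
      obtain rfl := reaches_antisymm hac (hcb.tail hbc) (reaches_of_delGraph h₁)
      exact h₁

theorem IsDelRoot.delGraph_reaches_of_between {s c₁ c₂ m : ℕ} (hac : N.Acyclic)
    (hs : IsDelRoot N s) (h₁ : (delGraph N).Reaches s c₁) (h₂ : (delGraph N).Reaches s c₂)
    (hm₁ : N.Reaches c₁ m) (hm₂ : N.Reaches m c₂) : (delGraph N).Reaches s m := by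
  rcases hs.delGraph_reaches_or_reaches hm₂ h₂ with h | hms
  · exact h
  · obtain rfl := reaches_antisymm hac hms ((reaches_of_delGraph h₁).trans hm₁)
    exact .refl

end FinDigraph

def OnImagePath (T : FinDigraph) (P : ℕ → ℕ → List ℕ) (v a x : ℕ) : Prop :=
  ∃ e ∈ T.edges, T.Reaches v e.1 ∧ T.Reaches e.2 a ∧ x ∈ P e.1 e.2

theorem OnImagePath.head {T : FinDigraph} {P : ℕ → ℕ → List ℕ} {v v' a x : ℕ}
    (he : (v, v') ∈ T.edges) (h : OnImagePath T P v' a x) : OnImagePath T P v a x :=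
  let ⟨e, he', h₁, h₂, hx⟩ := h
  ⟨e, he', h₁.head he, h₂, hx⟩

theorem onImagePath_of_mem {T : FinDigraph} {P : ℕ → ℕ → List ℕ} {v v' a x : ℕ}
    (he : (v, v') ∈ T.edges) (hv'a : T.Reaches v' a) (hx : x ∈ P v v') :
    OnImagePath T P v a x :=
  ⟨(v, v'), he, .refl, hv'a, hx⟩

namespace IsSubdivisionVia

open FinDigraph

variable {N T : FinDigraph} {E : Finset (ℕ × ℕ)} {φ : ℕ → ℕ} {P : ℕ → ℕ → List ℕ}
  {s a b c v v' w : ℕ}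

theorem map_leaf (hsub : IsSubdivisionVia T E φ P) (ha : T.IsLeaf a) : φ a = a :=
  hsub.2.1 a ha

theorem path_head? (hsub : IsSubdivisionVia T E φ P) (he : (v, v') ∈ T.edges) :
    (P v v').head? = some (φ v) :=
  (hsub.2.2.1 _ he).1

theorem path_getLast? (hsub : IsSubdivisionVia T E φ P) (he : (v, v') ∈ T.edges) :
    (P v v').getLast? = some (φ v') :=
  (hsub.2.2.1 _ he).2.1

theorem isChain_path (hsub : IsSubdivisionVia T E φ P) (hE : E ⊆ N.edges)
    (he : (v, v') ∈ T.edges) : (P v v').IsChain N.Adj :=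
  isChain_of_forall_mem_pathEdges fun d hd => hE ((hsub.2.2.1 _ he).2.2.2.2 d hd)

theorem reaches_map (hsub : IsSubdivisionVia T E φ P) (hE : E ⊆ N.edges)
    (h : T.Reaches v w) : N.Reaches (φ v) (φ w) := by
  induction h with
  | refl => exact .refl
  | tail _ hbc ih =>
    exact ih.trans ((hsub.isChain_path hE hbc).reflTransGen_head_getLast
      (hsub.path_head? hbc) (hsub.path_getLast? hbc))

theorem reaches_map_leaf (hsub : IsSubdivisionVia T E φ P) (hE : E ⊆ N.edges)
    (ha : T.IsLeaf a) (h : T.Reaches v a) : N.Reaches (φ v) a := by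
  simpa only [hsub.map_leaf ha] using hsub.reaches_map hE h

theorem isChain_delGraph_path (hsub : IsSubdivisionVia T E φ P) (hE : E ⊆ N.edges)
    (hac : N.Acyclic) (hs : IsDelRoot N s) (he : (v, v') ∈ T.edges)
    (h : (delGraph N).Reaches s (φ v)) (h' : (delGraph N).Reaches s (φ v')) :
    (P v v').IsChain (delGraph N).Adj := by
  have hch := hsub.isChain_path hE he
  have hmem : ∀ m ∈ P v v', (delGraph N).Reaches s m := fun m hm =>
    have hm := hch.reflTransGen_of_mem (hsub.path_head? he) (hsub.path_getLast? he) hm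
    hs.delGraph_reaches_of_between hac h h' hm.1 hm.2
  refine hch.imp_of_mem_imp fun x y hx hy hxy => delGraph_adj.mpr ⟨hxy, ?_⟩
  by_contra hdeg
  obtain rfl := (isDelRoot_of_not_indeg_le_one hdeg).eq_of_reaches (hmem y hy)
  exact hac _ _ hxy (reaches_of_delGraph (hmem x hx))

theorem delGraph_reaches_map_leaf (hsub : IsSubdivisionVia T E φ P) (hE : E ⊆ N.edges)
    (hac : N.Acyclic) (hs : IsDelRoot N s) (haL : T.IsLeaf a) (ha : (delGraph N).Reaches s a)
    (hva : T.Reaches v a) (hv : (delGraph N).Reaches s (φ v)) :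
    (delGraph N).Reaches (φ v) a := by
  induction hva using ReflTransGen.head_induction_on with
  | refl => rw [hsub.map_leaf haL]; exact .refl
  | @head v v' he hv'a ih =>
    have hv' : (delGraph N).Reaches s (φ v') := hs.delGraph_reaches_of_between hac hv ha
      (hsub.reaches_map hE (.single he)) (hsub.reaches_map_leaf hE haL hv'a)
    have hch := hsub.isChain_delGraph_path hE hac hs he hv hv'
    exact (hch.reflTransGen_head_getLast (hsub.path_head? he) (hsub.path_getLast? he)).trans
      (ih hv')

/-- An image path can only enter the component of `s` through `s`. -/
theorem delGraph_reaches_or_onImagePath (hsub : IsSubdivisionVia T E φ P)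
    (hE : E ⊆ N.edges) (hs : IsDelRoot N s) (haL : T.IsLeaf a)
    (ha : (delGraph N).Reaches s a) (hva : T.Reaches v a) :
    (delGraph N).Reaches s (φ v) ∨ OnImagePath T P v a s := by
  induction hva using ReflTransGen.head_induction_on with
  | refl => exact Or.inl (by rwa [hsub.map_leaf haL])
  | @head v v' he hv'a ih =>
    rcases ih with hv' | hsep
    · by_cases hv : (delGraph N).Reaches s (φ v)
      · exact Or.inl hv
      obtain ⟨x, y, hxy, hx, hy, hyP⟩ := (hsub.isChain_path hE he).exists_crossing _
        (hsub.path_head? he) (hsub.path_getLast? he) hv hv'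
      have hys : y = s := by
        by_cases hdeg : N.indeg y ≤ 1
        · exact absurd (hs.delGraph_reaches_of_adj hy (delGraph_adj.mpr ⟨hxy, hdeg⟩)) hx
        · exact ((isDelRoot_of_not_indeg_le_one hdeg).eq_of_reaches hy).symm
      exact Or.inr (onImagePath_of_mem he hv'a (hys ▸ hyP))
    · exact Or.inr (hsep.head he)

theorem eq_map_of_mem_path_of_mem_path (hsub : IsSubdivisionVia T E φ P)
    {e e' : ℕ × ℕ} (he : e ∈ T.edges) (he' : e' ∈ T.edges) (hne : e ≠ e') {x : ℕ}
    (hx : x ∈ P e.1 e.2) (hx' : x ∈ P e'.1 e'.2) : x = φ e.1 ∨ x = φ e.2 := by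
  rcases eq_head_or_eq_getLast_or_mem_internals hx (hsub.2.2.1 e he).1 (hsub.2.2.1 e he).2.1
    with h | h | h
  · exact Or.inl h
  · exact Or.inr h
  · exact absurd hx' (hsub.2.2.2.2.1 e he e' he' hne x h)

theorem eq_map_of_onImagePath_of_isLCA (hsub : IsSubdivisionVia T E φ P) (hTwf : T.WF)
    (hTac : T.Acyclic) {m x : ℕ} (hm : IsLCA T a b m) (hxa : OnImagePath T P m a x)
    (hxb : OnImagePath T P m b x) : x = φ m := by
  obtain ⟨ea, hea, hma, hea_a, hxa⟩ := hxa
  obtain ⟨eb, heb, hmb, heb_b, hxb⟩ := hxb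
  have hne : ea ≠ eb := by
    rintro rfl
    exact hTac _ _ hea ((hm.2.2 _ hea_a heb_b).trans hma)
  have hend : ∀ {e c}, e ∈ T.edges → T.Reaches m e.1 → T.Reaches e.2 c →
      x = φ e.1 ∨ x = φ e.2 → ∃ u ∈ T.verts, x = φ u ∧ T.Reaches m u ∧ T.Reaches u c := by
    rintro e c he h₁ h₂ (hx | hx)
    · exact ⟨e.1, (hTwf e he).1, hx, h₁, h₂.head he⟩
    · exact ⟨e.2, (hTwf e he).2, hx, h₁.tail he, h₂⟩
  obtain ⟨u, hu, rfl, hmu, hua⟩ :=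
    hend hea hma hea_a (hsub.eq_map_of_mem_path_of_mem_path hea heb hne hxa hxb)
  obtain ⟨u', hu', hφ, -, hu'b⟩ :=
    hend heb hmb heb_b (hsub.eq_map_of_mem_path_of_mem_path heb hea hne.symm hxb hxa)
  obtain rfl : u = u' := hsub.1 hu hu' hφ
  rw [reaches_antisymm hTac (hm.2.2 u hua hu'b) hmu]

theorem delGraph_reaches_map_of_isLCA (hsub : IsSubdivisionVia T E φ P) (hE : E ⊆ N.edges)
    (hTwf : T.WF) (hTac : T.Acyclic) (hs : IsDelRoot N s) {m : ℕ} (haL : T.IsLeaf a)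
    (hbL : T.IsLeaf b) (ha : (delGraph N).Reaches s a) (hb : (delGraph N).Reaches s b)
    (hm : IsLCA T a b m) : (delGraph N).Reaches s (φ m) := by
  rcases hsub.delGraph_reaches_or_onImagePath hE hs haL ha hm.1 with h | hsa
  · exact h
  rcases hsub.delGraph_reaches_or_onImagePath hE hs hbL hb hm.2.1 with h | hsb
  · exact h
  rw [← hsub.eq_map_of_onImagePath_of_isLCA hTwf hTac hm hsa hsb]
  exact .refl

theorem eq_or_onImagePath_of_delGraph_reaches (hsub : IsSubdivisionVia T E φ P)
    (hE : E ⊆ N.edges) (hac : N.Acyclic) (hs : IsDelRoot N s) (haL : T.IsLeaf a)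
    (ha : (delGraph N).Reaches s a) (hva : T.Reaches v a) (hv : (delGraph N).Reaches s (φ v))
    (hvw : (delGraph N).Reaches (φ v) w) (hwa : (delGraph N).Reaches w a) :
    w = φ v ∨ OnImagePath T P v a w := by
  induction hva using ReflTransGen.head_induction_on with
  | refl =>
    rw [hsub.map_leaf haL] at hvw ⊢
    exact Or.inl (reaches_antisymm hac.delGraph hwa hvw)
  | @head v v' he hv'a ih =>
    have hv' : (delGraph N).Reaches s (φ v') := hs.delGraph_reaches_of_between hac hv ha
      (hsub.reaches_map hE (.single he)) (hsub.reaches_map_leaf hE haL hv'a)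
    have hv'a' := hsub.delGraph_reaches_map_leaf hE hac hs haL ha hv'a hv'
    have hch := hsub.isChain_delGraph_path hE hac hs he hv hv'
    rcases ReflTransGen.total_of_leftUnique delGraph_leftUnique hwa hv'a' with hwv' | hv'w
    · exact Or.inr <| onImagePath_of_mem he hv'a <| hch.mem_of_reflTransGen delGraph_leftUnique
        (fun _ _ => reaches_antisymm hac.delGraph) (hsub.path_head? he) (hsub.path_getLast? he)
        hvw hwv'
    · rcases ih hv' hv'w with rfl | hw
      · exact Or.inr (onImagePath_of_mem he hv'a (List.mem_of_getLast? (hsub.path_getLast? he)))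
      · exact Or.inr (hw.head he)

theorem isLCA_delGraph_map (hsub : IsSubdivisionVia T E φ P) (hE : E ⊆ N.edges)
    (hac : N.Acyclic) (hTwf : T.WF) (hTac : T.Acyclic) (hs : IsDelRoot N s) {m : ℕ}
    (haL : T.IsLeaf a) (hbL : T.IsLeaf b) (ha : (delGraph N).Reaches s a)
    (hb : (delGraph N).Reaches s b) (hm : IsLCA T a b m) :
    IsLCA (delGraph N) a b (φ m) := by
  have hφm := hsub.delGraph_reaches_map_of_isLCA hE hTwf hTac hs haL hbL ha hb hm
  have hφma := hsub.delGraph_reaches_map_leaf hE hac hs haL ha hm.1 hφm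
  have hφmb := hsub.delGraph_reaches_map_leaf hE hac hs hbL hb hm.2.1 hφm
  refine ⟨hφma, hφmb, fun w hwa hwb => ?_⟩
  rcases ReflTransGen.total_of_leftUnique delGraph_leftUnique hwa hφma with hwm | hmw
  · exact hwm
  rcases hsub.eq_or_onImagePath_of_delGraph_reaches hE hac hs haL ha hm.1 hφm hmw hwa
    with rfl | hwa'
  · exact .refl
  rcases hsub.eq_or_onImagePath_of_delGraph_reaches hE hac hs hbL hb hm.2.1 hφm hmw hwb
    with rfl | hwb'
  · exact .refl
  obtain rfl := hsub.eq_map_of_onImagePath_of_isLCA hTwf hTac hm hwa' hwb'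
  exact .refl

theorem delGraph_reaches_map_of_onTreePath (hsub : IsSubdivisionVia T E φ P)
    (hE : E ⊆ N.edges) (hac : N.Acyclic) (hT : IsPhyloTree T) (hs : IsDelRoot N s)
    (haL : T.IsLeaf a) (hbL : T.IsLeaf b) (ha : (delGraph N).Reaches s a)
    (hb : (delGraph N).Reaches s b) {v : ℕ} (hv : OnTreePath T a b v) :
    (delGraph N).Reaches s (φ v) := by
  obtain ⟨m, hm⟩ := hT.exists_isLCA haL.1 hbL.1
  have hφm := hsub.delGraph_reaches_map_of_isLCA hE hT.1 hT.2.1 hs haL hbL ha hb hm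
  have below : ∀ {x y}, T.IsLeaf x → (delGraph N).Reaches s x → T.Reaches m x →
      T.Reaches v x → ¬ T.Reaches v y → T.Reaches m y → (delGraph N).Reaches s (φ v) := by
    intro x y hxL hx hmx hvx hvy hmy
    have hmv : T.Reaches m v :=
      (ReflTransGen.total_of_leftUnique hT.leftUnique hvx hmx).resolve_left
        fun hvm => hvy (hvm.trans hmy)
    exact hs.delGraph_reaches_of_between hac hφm hx (hsub.reaches_map hE hmv)
      (hsub.reaches_map_leaf hE hxL hvx)
  rcases hv with ⟨hva, hvb⟩ | ⟨hvb, hva⟩ | hv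
  · exact below haL ha hm.1 hva hvb hm.2.1
  · exact below hbL hb hm.2.1 hvb hva hm.1
  · exact hsub.delGraph_reaches_map_of_isLCA hE hT.1 hT.2.1 hs haL hbL ha hb hv

theorem triple_iff_triple_delGraph (hsub : IsSubdivisionVia T E φ P) (hE : E ⊆ N.edges)
    (hac : N.Acyclic) (hT : IsPhyloTree T) (hs : IsDelRoot N s) (haL : T.IsLeaf a)
    (hbL : T.IsLeaf b) (hcL : T.IsLeaf c) (ha : (delGraph N).Reaches s a)
    (hb : (delGraph N).Reaches s b) (hc : (delGraph N).Reaches s c) :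
    Triple T a b c ↔ Triple (delGraph N) a b c := by
  obtain ⟨u, hu⟩ := hT.exists_isLCA haL.1 hbL.1
  obtain ⟨v, hv⟩ := hT.exists_isLCA haL.1 hcL.1
  have hφu := hsub.isLCA_delGraph_map hE hac hT.1 hT.2.1 hs haL hbL ha hb hu
  have hφv := hsub.isLCA_delGraph_map hE hac hT.1 hT.2.1 hs haL hcL ha hc hv
  have hreach : ∀ {x y}, T.Reaches x y → (delGraph N).Reaches s (φ x) →
      (delGraph N).Reaches s (φ y) → (delGraph N).Reaches (φ x) (φ y) := fun hxy hx hy =>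
    hs.delGraph_reaches_of_reaches hac hx (hsub.reaches_map hE hxy) hy
  have hsu := hsub.delGraph_reaches_map_of_isLCA hE hT.1 hT.2.1 hs haL hbL ha hb hu
  have hsv := hsub.delGraph_reaches_map_of_isLCA hE hT.1 hT.2.1 hs haL hcL ha hc hv
  constructor
  · rintro ⟨u', v', hu', hv', hne, hvu⟩
    obtain rfl := hu'.eq hT.2.1 hu
    obtain rfl := hv'.eq hT.2.1 hv
    refine ⟨φ u', φ v', hφu, hφv, fun h => hne (hsub.1 ?_ ?_ h), hreach hvu hsv hsu⟩
    · exact mem_verts_of_reaches hT.1 hu'.1 haL.1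
    · exact mem_verts_of_reaches hT.1 hv'.1 haL.1
  · rintro ⟨u', v', hu', hv', hne, hvu⟩
    obtain rfl := hu'.eq hac.delGraph hφu
    obtain rfl := hv'.eq hac.delGraph hφv
    refine ⟨u, v, hu, hv, fun h => hne (h ▸ rfl), ?_⟩
    refine (ReflTransGen.total_of_leftUnique hT.leftUnique hv.1 hu.1).resolve_right
      fun huv => hne ?_
    exact reaches_antisymm hac.delGraph (hreach huv hsu hsv) hvu

end IsSubdivisionVia

section DeletionForest

open FinDigraph

variable {N T : FinDigraph} {B B' : Finset ℕ} {x y : ℕ}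

noncomputable def delBlock (N : FinDigraph) (x : ℕ) : Finset ℕ :=
  N.leaves.filter fun y => DelReach N x y

theorem mem_delBlock : y ∈ delBlock N x ↔ y ∈ N.leaves ∧ DelReach N x y :=
  Finset.mem_filter

theorem delBlock_eq_of_delReach (h : DelReach N x y) : delBlock N x = delBlock N y := by
  ext z
  simp only [mem_delBlock]
  exact and_congr_right fun _ => ⟨(delReach_symm h).trans, h.trans⟩

theorem mem_deletionForest : B ∈ deletionForest N ↔ ∃ x ∈ N.leaves, delBlock N x = B :=
  Finset.mem_image

theorem mem_leaves_of_mem_deletionForest (hB : B ∈ deletionForest N) (hx : x ∈ B) :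
    x ∈ N.leaves := by
  obtain ⟨x₀, -, rfl⟩ := mem_deletionForest.mp hB
  exact (mem_delBlock.mp hx).1

theorem isLeaf_of_mem_deletionForest (hTN : T.leaves = N.leaves)
    (hB : B ∈ deletionForest N) (hx : x ∈ B) : T.IsLeaf x :=
  isLeaf_iff_mem_leaves.mpr (hTN ▸ mem_leaves_of_mem_deletionForest hB hx)

noncomputable def blockRoot (N : FinDigraph) (B : Finset ℕ) : ℕ :=
  Classical.epsilon fun s => IsDelRoot N s ∧ ∃ x ∈ B, DelReach N x s

theorem blockRoot_spec (hwf : N.WF) (hac : N.Acyclic) (hB : B ∈ deletionForest N) :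
    IsDelRoot N (blockRoot N B) ∧ ∀ x ∈ B, (delGraph N).Reaches (blockRoot N B) x := by
  obtain ⟨x₀, hx₀, rfl⟩ := mem_deletionForest.mp hB
  obtain ⟨s, hs, hsx₀⟩ := exists_isDelRoot_reaches hwf hac x₀
  obtain ⟨hroot, x, hx, hxroot⟩ := Classical.epsilon_spec (p := fun s =>
    IsDelRoot N s ∧ ∃ x ∈ delBlock N x₀, DelReach N x s)
    ⟨s, hs, x₀, mem_delBlock.mpr ⟨hx₀, .refl⟩, delReach_symm (delReach_of_delGraph hsx₀)⟩
  refine ⟨hroot, fun y hy => hroot.delGraph_reaches_of_delReach ?_⟩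
  exact (delReach_symm hxroot).trans ((delReach_symm (mem_delBlock.mp hx).2).trans
    (mem_delBlock.mp hy).2)

theorem blockRoot_injOn (hwf : N.WF) (hac : N.Acyclic) :
    Set.InjOn (blockRoot N) (deletionForest N) := by
  intro B hB B' hB' h
  obtain ⟨x, hx, rfl⟩ := mem_deletionForest.mp hB
  obtain ⟨x', hx', rfl⟩ := mem_deletionForest.mp hB'
  have hsx := (blockRoot_spec hwf hac hB).2 x (mem_delBlock.mpr ⟨hx, .refl⟩)
  have hsx' := (blockRoot_spec hwf hac hB').2 x' (mem_delBlock.mpr ⟨hx', .refl⟩)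
  rw [h] at hsx
  exact delBlock_eq_of_delReach
    ((delReach_symm (delReach_of_delGraph hsx)).trans (delReach_of_delGraph hsx'))

theorem eq_of_blockRoot_reaches (hwf : N.WF) (hac : N.Acyclic) (hB : B ∈ deletionForest N)
    (hB' : B' ∈ deletionForest N) {w : ℕ} (h : (delGraph N).Reaches (blockRoot N B) w)
    (h' : (delGraph N).Reaches (blockRoot N B') w) : B = B' :=
  blockRoot_injOn hwf hac hB hB' <|
    (blockRoot_spec hwf hac hB).1.eq_of_reaches_of_reaches (blockRoot_spec hwf hac hB').1 h h'

theorem FinDigraph.card_filter_two_le_indeg_le_hybNum :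
    (N.verts.filter fun v => 2 ≤ N.indeg v).card ≤ N.hybNum := by
  rw [hybNum, Finset.card_eq_sum_ones]
  exact Finset.sum_le_sum fun v hv => by have := (Finset.mem_filter.mp hv).2; omega

theorem card_deletionForest_le (hwf : N.WF) (hac : N.Acyclic) {r : ℕ}
    (hroot : ∀ v ∈ N.verts, N.Reaches r v) : (deletionForest N).card ≤ N.hybNum + 1 := by
  have hmaps : ∀ B ∈ deletionForest N, blockRoot N B ∈
      N.verts.filter (fun v => N.indeg v = 0) ∪ N.verts.filter (fun v => 2 ≤ N.indeg v) := by
    intro B hB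
    obtain ⟨hs, hreach⟩ := blockRoot_spec hwf hac hB
    obtain ⟨x, hx⟩ : B.Nonempty := by
      obtain ⟨x, hx, rfl⟩ := mem_deletionForest.mp hB
      exact ⟨x, mem_delBlock.mpr ⟨hx, .refl⟩⟩
    have hxV : x ∈ N.verts := (Finset.mem_filter.mp (mem_leaves_of_mem_deletionForest hB hx)).1
    have hsV := mem_verts_of_reaches hwf (reaches_of_delGraph (hreach x hx)) hxV
    rw [← Finset.filter_or]
    exact Finset.mem_filter.mpr ⟨hsV, hs.indeg_eq_zero_or_two_le⟩
  have hsources : N.verts.filter (fun v => N.indeg v = 0) ⊆ {r} := by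
    intro v hv
    obtain ⟨hvV, hv0⟩ := Finset.mem_filter.mp hv
    rcases (hroot v hvV).cases_tail with rfl | ⟨u, -, huv⟩
    · exact Finset.mem_singleton_self _
    · exact absurd (indeg_ne_zero_iff.mpr ⟨u, huv⟩) (not_not.mpr hv0)
  calc (deletionForest N).card
      ≤ (N.verts.filter (fun v => N.indeg v = 0) ∪
          N.verts.filter (fun v => 2 ≤ N.indeg v)).card :=
        Finset.card_le_card_of_injOn _ hmaps (blockRoot_injOn hwf hac)
    _ ≤ 1 + N.hybNum := (Finset.card_union_le _ _).trans <| Nat.add_le_add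
        ((Finset.card_le_card hsources).trans (Finset.card_singleton r).le)
        card_filter_two_le_indeg_le_hybNum
    _ = N.hybNum + 1 := add_comm _ _

end DeletionForest

section AgreementForest

open FinDigraph

variable {N T : FinDigraph} {B B' : Finset ℕ}

theorem blockRoot_reaches_map_of_inSpan {E : Finset (ℕ × ℕ)} {φ : ℕ → ℕ}
    {P : ℕ → ℕ → List ℕ} (hsub : IsSubdivisionVia T E φ P) (hE : E ⊆ N.edges)
    (hwf : N.WF) (hac : N.Acyclic) (hT : IsPhyloTree T) (hTN : T.leaves = N.leaves)
    (hB : B ∈ deletionForest N) {v : ℕ} (hv : InSpan T B v) :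
    (delGraph N).Reaches (blockRoot N B) (φ v) := by
  obtain ⟨a, ha, b, hb, hv⟩ := hv
  obtain ⟨hs, hreach⟩ := blockRoot_spec hwf hac hB
  exact hsub.delGraph_reaches_map_of_onTreePath hE hac hT hs
    (isLeaf_of_mem_deletionForest hTN hB ha) (isLeaf_of_mem_deletionForest hTN hB hb)
    (hreach a ha) (hreach b hb) hv

theorem deletionForest_isForestFor (hwf : N.WF) (hac : N.Acyclic) (hT : IsPhyloTree T)
    (hTN : T.leaves = N.leaves) (hd : Displays N T) : IsForestFor T (deletionForest N) := by
  refine ⟨fun B hB => ?_, fun B hB x hx => isLeaf_of_mem_deletionForest hTN hB hx,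
    fun x hx => ?_, fun B hB B' hB' hne v hv hv' => ?_⟩
  · obtain ⟨x, hx, rfl⟩ := mem_deletionForest.mp hB
    exact ⟨x, mem_delBlock.mpr ⟨hx, .refl⟩⟩
  · have hxN : x ∈ N.leaves := hTN ▸ isLeaf_iff_mem_leaves.mp hx
    exact ⟨delBlock N x, mem_deletionForest.mpr ⟨x, hxN, rfl⟩, mem_delBlock.mpr ⟨hxN, .refl⟩⟩
  · obtain ⟨E, hE, φ, P, hsub⟩ := hd
    exact hne <| eq_of_blockRoot_reaches hwf hac hB hB'
      (blockRoot_reaches_map_of_inSpan hsub hE hwf hac hT hTN hB hv)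
      (blockRoot_reaches_map_of_inSpan hsub hE hwf hac hT hTN hB' hv')

theorem triple_iff_triple_delGraph_of_mem_deletionForest (hwf : N.WF) (hac : N.Acyclic)
    (hT : IsPhyloTree T) (hTN : T.leaves = N.leaves) (hd : Displays N T)
    (hB : B ∈ deletionForest N) {a b c : ℕ} (ha : a ∈ B) (hb : b ∈ B) (hc : c ∈ B) :
    Triple T a b c ↔ Triple (delGraph N) a b c := by
  obtain ⟨E, hE, φ, P, hsub⟩ := hd
  obtain ⟨hs, hreach⟩ := blockRoot_spec hwf hac hB
  exact hsub.triple_iff_triple_delGraph hE hac hT hs (isLeaf_of_mem_deletionForest hTN hB ha)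
    (isLeaf_of_mem_deletionForest hTN hB hb) (isLeaf_of_mem_deletionForest hTN hB hc)
    (hreach a ha) (hreach b hb) (hreach c hc)

theorem sameTriples_of_mem_deletionForest {T' : FinDigraph} (hwf : N.WF) (hac : N.Acyclic)
    (hT : IsPhyloTree T) (hTN : T.leaves = N.leaves) (hd : Displays N T)
    (hT' : IsPhyloTree T') (hT'N : T'.leaves = N.leaves) (hd' : Displays N T')
    (hB : B ∈ deletionForest N) : SameTriples T T' B := fun _ ha _ hb _ hc =>
  (triple_iff_triple_delGraph_of_mem_deletionForest hwf hac hT hTN hd hB ha hb hc).trans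
    (triple_iff_triple_delGraph_of_mem_deletionForest hwf hac hT' hT'N hd' hB ha hb hc).symm

theorem reaches_blockRoot_of_spanRoot (hwf : N.WF) (hac : N.Acyclic) (hT : IsPhyloTree T)
    (hTN : T.leaves = N.leaves) (hd : Displays N T) (hB : B ∈ deletionForest N)
    (hB' : B' ∈ deletionForest N) (hne : B ≠ B') {r r' : ℕ} (hr : SpanRoot T B r)
    (hr' : SpanRoot T B' r') (hrr' : T.Reaches r r') :
    N.Reaches (blockRoot N B) (blockRoot N B') := by
  obtain ⟨E, hE, φ, P, hsub⟩ := hd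
  have hφr := blockRoot_reaches_map_of_inSpan hsub hE hwf hac hT hTN hB hr.1
  have hφr' := blockRoot_reaches_map_of_inSpan hsub hE hwf hac hT hTN hB' hr'.1
  have hreach := (reaches_of_delGraph hφr).trans (hsub.reaches_map hE hrr')
  exact ((blockRoot_spec hwf hac hB').1.delGraph_reaches_or_reaches hreach hφr').resolve_left
    fun h => hne (eq_of_blockRoot_reaches hwf hac hB hB' .refl h)

theorem deletionForest_igAcyclic {ι : Type} {𝒯 : ι → FinDigraph} (hwf : N.WF)
    (hac : N.Acyclic) (hT : ∀ i, IsPhyloTree (𝒯 i)) (hTN : ∀ i, (𝒯 i).leaves = N.leaves)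
    (hd : ∀ i, Displays N (𝒯 i)) : IGAcyclic 𝒯 (deletionForest N) := by
  have hstep : ∀ {B B'}, IGAdj 𝒯 (deletionForest N) B B' →
      N.Reaches (blockRoot N B) (blockRoot N B') := by
    rintro B B' ⟨hB, hB', hne, i, r, r', hr, hr', hrr'⟩
    exact reaches_blockRoot_of_spanRoot hwf hac (hT i) (hTN i) (hd i) hB hB' hne hr hr' hrr'
  have hpath : ∀ {B B'}, ReflTransGen (IGAdj 𝒯 (deletionForest N)) B B' →
      N.Reaches (blockRoot N B) (blockRoot N B') := by
    intro B B' h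
    induction h with
    | refl => exact .refl
    | tail _ h ih => exact ih.trans (hstep h)
  intro B B' hBB' hB'B
  exact hBB'.2.2.1 <| blockRoot_injOn hwf hac hBB'.1 hBB'.2.1 <|
    reaches_antisymm hac (hstep hBB') (hpath hB'B)

end AgreementForest

/-- Let `𝒯` be a set of rooted binary phylogenetic `X`-trees and let `N`
be a hybridization network for `𝒯` with hybridization number `k`. Then the deletion
forest of `N` is an acyclic agreement forest of `𝒯` with at most `k + 1` components. -/
theorem deletionForest_isAAF
    {ι : Type} (𝒯 : ι → FinDigraph) (X : Finset ℕ)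
    (hT : ∀ i, IsTreeOn (𝒯 i) X)
    (N : FinDigraph) (k : ℕ)
    (hN : IsHybNetworkFor N 𝒯 X) (hk : N.hybNum = k) :
    IsAAF 𝒯 (deletionForest N) ∧ (deletionForest N).card ≤ k + 1 := by
  obtain ⟨⟨hwf, hac, ⟨r, -, -, hroot⟩, -⟩, hXN, hd⟩ := hN
  have hTN : ∀ i, (𝒯 i).leaves = N.leaves := fun i => (hT i).2.trans hXN.symm
  subst hk
  refine ⟨⟨⟨fun i => deletionForest_isForestFor hwf hac (hT i).1 (hTN i) (hd i),
    fun i j B hB => ?_⟩,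
    deletionForest_igAcyclic hwf hac (fun i => (hT i).1) hTN hd⟩,
    card_deletionForest_le hwf hac hroot⟩
  exact sameTriples_of_mem_deletionForest hwf hac (hT i).1 (hTN i) (hd i) (hT j).1 (hTN j) (hd j)
    hB
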